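/- arXiv:1406.5557 — 2 statements merged into one kernel-verified Lean document; each statement's English description precedes it below -/
import Mathlib

section
/- For every n ≥ 1, the permutation matrix σ_n satisfies σ_nᵀ M_B^{(n)} σ_n = M_L^{(n)}. -/
open Matrix

/-- Equivalence identifying `Fin (2^n) ⊕ Fin (2^n)` with `Fin (2^(n+1))`. -/
def blockEquiv (n : ℕ) : Fin (2 ^ n) ⊕ Fin (2 ^ n) ≃ Fin (2 ^ (n + 1)) :=
  finSumFinEquiv.trans (finCongr (by rw [pow_succ, mul_two]))

/-- Assemble a `2^(n+1) × 2^(n+1)` matrix from four `2^n × 2^n` blocks. -/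
noncomputable def mkBlock {n : ℕ} (A B C D : Matrix (Fin (2 ^ n)) (Fin (2 ^ n)) ℝ) :
    Matrix (Fin (2 ^ (n + 1))) (Fin (2 ^ (n + 1))) ℝ :=
  Matrix.reindex (blockEquiv n) (blockEquiv n) (Matrix.fromBlocks A B C D)

/-- The pair of BBS translation generators. -/
noncomputable def abB : (n : ℕ) →
    Matrix (Fin (2 ^ n)) (Fin (2 ^ n)) ℝ × Matrix (Fin (2 ^ n)) (Fin (2 ^ n)) ℝ
  | 0 => (1, 1)
  | n + 1 => (mkBlock (abB n).1 (abB n).2 0 0, mkBlock 0 0 (abB n).1 (abB n).2)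

noncomputable def aB (n : ℕ) : Matrix (Fin (2 ^ n)) (Fin (2 ^ n)) ℝ := (abB n).1
noncomputable def bB (n : ℕ) : Matrix (Fin (2 ^ n)) (Fin (2 ^ n)) ℝ := (abB n).2

/-- The pair of lamplighter generators. -/
noncomputable def abL : (n : ℕ) →
    Matrix (Fin (2 ^ n)) (Fin (2 ^ n)) ℝ × Matrix (Fin (2 ^ n)) (Fin (2 ^ n)) ℝ
  | 0 => (1, 1)
  | n + 1 => (mkBlock 0 (abL n).2 (abL n).1 0, mkBlock (abL n).1 0 0 (abL n).2)

noncomputable def aL (n : ℕ) : Matrix (Fin (2 ^ n)) (Fin (2 ^ n)) ℝ := (abL n).1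
noncomputable def bL (n : ℕ) : Matrix (Fin (2 ^ n)) (Fin (2 ^ n)) ℝ := (abL n).2

/-- The BBS translation transition operator. -/
noncomputable def MB (n : ℕ) : Matrix (Fin (2 ^ n)) (Fin (2 ^ n)) ℝ :=
  (1 / 4 : ℝ) • (aB n + (aB n)ᵀ + bB n + (bB n)ᵀ)

/-- The lamplighter transition operator. -/
noncomputable def ML (n : ℕ) : Matrix (Fin (2 ^ n)) (Fin (2 ^ n)) ℝ :=
  (1 / 4 : ℝ) • (aL n + (aL n)ᵀ + bL n + (bL n)ᵀ)

/-- The Sierpinski gasket pattern: `g n m` is `g_m^{(n)} ∈ {0,1}` for `1 ≤ m ≤ n`,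
defined by `g_1^{(n)} = g_n^{(n)} = 1` and
`g_m^{(n)} = g_{m-1}^{(n-1)} + g_m^{(n-1)} mod 2` for `2 ≤ m ≤ n−1`. -/
def g : ℕ → ℕ → ℕ
  | 0, _ => 0
  | n + 1, m =>
    if m = 1 ∨ m = n + 1 then 1
    else if 2 ≤ m ∧ m ≤ n then (g n (m - 1) + g n m) % 2
    else 0

/-- The doubling operators `T_0` and `T_1` on binary tuples. -/
def Tmap (α : ℕ) (s : List ℕ) : List ℕ :=
  if α = 0 then s ++ s else s ++ s.map (fun x => 1 - x)

/-- The binary tuple `ν⁽ⁿ⁾ = (T_{g_1^{(n)}} ∘ T_{g_2^{(n)}} ∘ ⋯ ∘ T_{g_{n-1}^{(n)}})(0)`,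
of length `2^{n-1}`. -/
def nuList (n : ℕ) : List ℕ :=
  (List.range (n - 1)).foldr (fun i acc => Tmap (g n (i + 1)) acc) [0]

/-- The entry `ν_m^{(n)}`. -/
def nu (n m : ℕ) : ℕ := (nuList n).getD m 0

/-- The map `σ̂_n` on `I_n = {0, …, 2ⁿ−1}`: `σ̂_1 = id` and
`σ̂_n(j) = σ̂_{n-1}(j mod 2^{n-1}) + 2^{n-1}·c_j` where `c_{2m} = 1 − ν_m^{(n)}` and
`c_{2m+1} = ν_m^{(n)}`. -/
def sigmaHat : ℕ → ℕ → ℕ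
  | 0, j => j
  | 1, j => j
  | n + 2, j =>
    sigmaHat (n + 1) (j % 2 ^ (n + 1)) +
      2 ^ (n + 1) * (if j % 2 = 0 then 1 - nu (n + 2) (j / 2) else nu (n + 2) (j / 2))
/-- The permutation matrix `σₙ` with `σₙ e_j = e_{σ̂ₙ(j)}`. -/
noncomputable def sigmaMat (n : ℕ) : Matrix (Fin (2 ^ n)) (Fin (2 ^ n)) ℝ :=
  Matrix.of fun i j => if (i : ℕ) = sigmaHat n (j : ℕ) then (1 : ℝ) else 0


/-- the `k`-th binary digit of `j` -/
def nbit (j k : ℕ) : ℕ := j / 2 ^ k % 2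

lemma nbit_le_one (j k : ℕ) : nbit j k ≤ 1 := Nat.lt_succ_iff.mp (Nat.mod_lt _ (by norm_num))

lemma nbit_mod (j s m : ℕ) (h : s < m) : nbit (j % 2 ^ m) s = nbit j s := by
  unfold nbit
  have : (2:ℕ) ^ m = 2 ^ s * 2 ^ (m - s) := by rw [← pow_add]; congr 1; omega
  rw [this, Nat.mod_mul_right_div_self, Nat.mod_mod_of_dvd]
  exact dvd_pow_self 2 (by omega)

lemma nbit_add_pow (r t k : ℕ) (h : k < t) : nbit (2 ^ t + r) k = nbit r k := by
  unfold nbit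
  have h2 : (2:ℕ) ^ t = 2 ^ k * 2 ^ (t - k) := by rw [← pow_add]; congr 1; omega
  rw [h2, Nat.mul_add_div (by positivity), Nat.add_mod]
  have h3 : 2 ^ (t - k) % 2 = 0 := by
    have : t - k ≠ 0 := by omega
    simp [Nat.pow_mod, this]
  simp [h3]

lemma nbit_eq_zero_of_lt {j n : ℕ} (h : j < 2 ^ n) (k : ℕ) (hk : n ≤ k) : nbit j k = 0 := by
  unfold nbit
  rw [Nat.div_eq_of_lt (lt_of_lt_of_le h (Nat.pow_le_pow_right (by norm_num) hk))]

/-- expansion of a number into its bits -/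
lemma nbit_expand : ∀ (n j : ℕ), j < 2 ^ n → j = ∑ k ∈ Finset.range n, 2 ^ k * nbit j k := by
  intro n
  induction n with
  | zero => intro j h; interval_cases j; simp
  | succ n ih =>
    intro j h
    rw [Finset.sum_range_succ]
    have h1 : j % 2 ^ n = ∑ k ∈ Finset.range n, 2 ^ k * nbit (j % 2 ^ n) k :=
      ih _ (Nat.mod_lt _ (by positivity))
    have h2 : ∀ k ∈ Finset.range n, 2 ^ k * nbit (j % 2^n) k = 2 ^ k * nbit j k := by
      intro k hk; rw [nbit_mod _ _ _ (Finset.mem_range.mp hk)]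
    rw [Finset.sum_congr rfl h2] at h1
    have h3 : nbit j n = j / 2 ^ n := by
      unfold nbit; rw [Nat.mod_eq_of_lt]
      exact Nat.div_lt_of_lt_mul (by rw [← pow_succ]; exact h)
    rw [h3, ← h1, Nat.mod_add_div]

/-- bits of a sum of weighted bits -/
lemma nbit_sum (f : ℕ → ℕ) (hf : ∀ k, f k ≤ 1) :
    ∀ (n : ℕ), (∀ k, k < n → nbit (∑ s ∈ Finset.range n, 2 ^ s * f s) k = f k)
      ∧ (∑ s ∈ Finset.range n, 2 ^ s * f s) < 2 ^ n := by
  intro n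
  induction n with
  | zero => simp
  | succ m ih =>
    obtain ⟨ih1, ih2⟩ := ih
    have hfm := hf m
    have hb : 2 ^ m * f m ≤ 2 ^ m := by
      calc 2 ^ m * f m ≤ 2 ^ m * 1 := Nat.mul_le_mul_left _ hfm
      _ = 2 ^ m := by ring
    constructor
    · intro k hk
      rw [Finset.sum_range_succ]
      rcases Nat.lt_or_ge k m with hkn | hkn
      · rcases Nat.eq_zero_or_pos (f m) with h0 | h1
        · rw [h0, Nat.mul_zero, Nat.add_zero]; exact ih1 k hkn
        · have : f m = 1 := le_antisymm hfm h1
          rw [this, Nat.mul_one, Nat.add_comm, nbit_add_pow _ _ _ hkn]; exact ih1 k hkn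
      · have hflt : f m < 2 := by omega
        have hk' : k = m := by omega
        subst hk'
        unfold nbit
        rw [Nat.add_mul_div_left _ _ (by positivity), Nat.div_eq_of_lt ih2]
        simp [Nat.mod_eq_of_lt hflt]
    · rw [Finset.sum_range_succ]
      have h2 : (2:ℕ) ^ (m+1) = 2 ^ m + 2 ^ m := by ring
      omega

lemma g_eq : ∀ n m : ℕ, 1 ≤ m → m ≤ n → g n m = Nat.choose (n-1) (m-1) % 2 := by
  intro n
  induction n with
  | zero => intro m h1 h2; omega
  | succ n ih =>
    intro m h1 h2
    rcases eq_or_ne m 1 with rfl | hm1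
    · simp [g]
    rcases eq_or_ne m (n+1) with rfl | hmn
    · simp [g, Nat.choose_self]
    have h2le : 2 ≤ m := by omega
    have hmln : m ≤ n := by omega
    have hn2 : 2 ≤ n := by omega
    rw [show g (n+1) m = (g n (m-1) + g n m) % 2 by simp [g, hm1, hmn, h2le, hmln]]
    rw [ih (m-1) (by omega) (by omega), ih m (by omega) hmln]
    obtain ⟨n', rfl⟩ : ∃ n', n = n'+2 := ⟨n-2, by omega⟩
    obtain ⟨m', rfl⟩ : ∃ m', m = m'+2 := ⟨m-2, by omega⟩
    have e1 : n'+2-1 = n'+1 := by omega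
    have e2 : m'+2-1-1 = m' := by omega
    have e3 : m'+2-1 = m'+1 := by omega
    have e4 : n'+2+1-1 = n'+1+1 := by omega
    rw [e1, e2, e3, e4, Nat.choose_succ_succ (n'+1) m']
    simp only [Nat.succ_eq_add_one]
    omega

lemma g_le_one (n m : ℕ) : g n m ≤ 1 := by
  match n with
  | 0 => simp [g]
  | n + 1 =>
    simp only [g]
    split
    · exact le_refl 1
    · split
      · exact Nat.lt_succ_iff.mp (Nat.mod_lt _ (by norm_num))
      · exact Nat.zero_le 1

lemma Tmap_length (α : ℕ) (s : List ℕ) : (Tmap α s).length = 2 * s.length := by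
  unfold Tmap; split <;> simp <;> omega

lemma Tmap_getD_left (a : ℕ) (s : List ℕ) (m : ℕ) (h : m < s.length) :
    (Tmap a s).getD m 0 = s.getD m 0 := by
  unfold Tmap; split <;> exact List.getD_append _ _ _ _ h

lemma Tmap_getD_right (a : ℕ) (s : List ℕ) (m : ℕ) (h1 : s.length ≤ m) (h2 : m - s.length < s.length) :
    (Tmap a s).getD m 0 = if a = 0 then s.getD (m - s.length) 0 else 1 - s.getD (m - s.length) 0 := by
  unfold Tmap
  split
  · rw [List.getD_append_right _ _ _ _ h1]
  · rw [List.getD_append_right _ _ _ _ h1]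
    have hl : m - s.length < (s.map (fun x => 1 - x)).length := by rwa [List.length_map]
    rw [List.getD_eq_getElem _ _ hl, List.getElem_map, List.getD_eq_getElem _ _ h2]

lemma Tmap_mem_le_one (a : ℕ) (s : List ℕ) (hs : ∀ x ∈ s, x ≤ 1) :
    ∀ x ∈ Tmap a s, x ≤ 1 := by
  intro x hx
  unfold Tmap at hx
  split at hx <;> rw [List.mem_append] at hx
  · rcases hx with h | h <;> exact hs x h
  · rcases hx with h | h
    · exact hs x h
    · rw [List.mem_map] at h; obtain ⟨y, _, rfl⟩ := h; omega

lemma foldT (L : List ℕ) (hL : ∀ x ∈ L, x ≤ 1) :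
    ((L.foldr Tmap [0]).length = 2 ^ L.length ∧ (∀ x ∈ L.foldr Tmap [0], x ≤ 1)) ∧
    ∀ m, m < 2 ^ L.length → (L.foldr Tmap [0]).getD m 0 =
      (∑ k ∈ Finset.range L.length, nbit m k * L.getD (L.length - 1 - k) 0) % 2 := by
  induction L with
  | nil =>
    clear hL
    refine ⟨⟨by simp, by simp⟩, ?_⟩
    intro m hm
    simp only [List.length_nil, pow_zero] at hm
    interval_cases m
    simp
  | cons a L' ih =>
    rw [List.forall_mem_cons] at hL
    obtain ⟨⟨hlen, hmem⟩, ihD⟩ := ih hL.2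
    simp only [List.foldr_cons, List.length_cons]
    refine ⟨⟨by rw [Tmap_length, hlen]; ring, Tmap_mem_le_one _ _ hmem⟩, ?_⟩
    intro m hm
    rw [Finset.sum_range_succ]
    have hgd0 : (a :: L').getD (L'.length + 1 - 1 - L'.length) 0 = a := by simp
    have hgdk : ∀ k ∈ Finset.range L'.length,
        nbit m k * (a :: L').getD (L'.length + 1 - 1 - k) 0
          = nbit m k * L'.getD (L'.length - 1 - k) 0 := by
      intro k hk
      rw [Finset.mem_range] at hk
      have : L'.length + 1 - 1 - k = (L'.length - 1 - k) + 1 := by omega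
      rw [this, List.getD_cons_succ]
    rw [hgd0, Finset.sum_congr rfl hgdk]
    have hpow : (2:ℕ) ^ (L'.length + 1) = 2 ^ L'.length + 2 ^ L'.length := by ring
    rcases Nat.lt_or_ge m (2 ^ L'.length) with hml | hmg
    · have hb : nbit m L'.length = 0 := nbit_eq_zero_of_lt hml _ le_rfl
      rw [Tmap_getD_left _ _ _ (by rw [hlen]; exact hml), ihD m hml, hb]
      simp
    · set r := m - 2 ^ L'.length with hr
      have hrm : m = 2 ^ L'.length + r := by omega
      have hrlt : r < 2 ^ L'.length := by omega
      have hbits : ∀ k ∈ Finset.range L'.length,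
          nbit m k * L'.getD (L'.length - 1 - k) 0 = nbit r k * L'.getD (L'.length - 1 - k) 0 := by
        intro k hk
        rw [Finset.mem_range] at hk
        rw [hrm, nbit_add_pow _ _ _ hk]
      have hbtop : nbit m L'.length = 1 := by
        unfold nbit
        rw [hrm, Nat.add_comm, Nat.add_div_right _ (by positivity), Nat.div_eq_of_lt hrlt]
      rw [Finset.sum_congr rfl hbits, hbtop, one_mul]
      have hS := ihD r hrlt
      have hmod2 : (∑ k ∈ Finset.range L'.length, nbit r k * L'.getD (L'.length - 1 - k) 0) % 2 ≤ 1 :=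
        Nat.lt_succ_iff.mp (Nat.mod_lt _ (by norm_num))
      rw [Tmap_getD_right _ _ _ (by omega) (by rw [hlen]; omega), hlen, ← hr, hS]
      rcases eq_or_ne a 0 with rfl | ha
      · simp
      · rw [if_neg ha]
        have ha1 : a = 1 := le_antisymm hL.1 (by omega)
        rw [ha1]
        omega

lemma nuList_eq (n : ℕ) :
    nuList n = ((List.range (n-1)).map (fun i => g n (i+1))).foldr Tmap [0] := by
  rw [List.foldr_map]; rfl

lemma nu_le_one (n m : ℕ) : nu n m ≤ 1 := by
  unfold nu
  rw [nuList_eq]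
  set L := (List.range (n-1)).map (fun i => g n (i+1)) with hL
  have hmem : ∀ x ∈ L, x ≤ 1 := by
    intro x hx
    rw [List.mem_map] at hx
    obtain ⟨y, _, rfl⟩ := hx
    exact g_le_one _ _
  rcases Nat.lt_or_ge m (L.foldr Tmap [0]).length with h | h
  · exact (foldT L hmem).1.2 _ (List.getD_eq_getElem _ _ h ▸ List.getElem_mem h)
  · rw [List.getD_eq_default _ _ h]; omega

lemma nu_formula (n m : ℕ) (hn : 1 ≤ n) (hm : m < 2 ^ (n-1)) :
    (nu n m : ZMod 2)
      = ∑ k ∈ Finset.range (n-1), (nbit m k : ZMod 2) * ((n-1).choose (k+1) : ZMod 2) := by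
  unfold nu
  rw [nuList_eq]
  set L := (List.range (n-1)).map (fun i => g n (i+1)) with hLdef
  have hmem : ∀ x ∈ L, x ≤ 1 := by
    intro x hx
    rw [List.mem_map] at hx
    obtain ⟨y, _, rfl⟩ := hx
    exact g_le_one _ _
  have hlen : L.length = n - 1 := by simp [hLdef]
  rw [(foldT L hmem).2 m (by rwa [hlen])]
  rw [ZMod.natCast_mod, Nat.cast_sum]
  rw [hlen]
  refine Finset.sum_congr rfl ?_
  intro k hk
  rw [Finset.mem_range] at hk
  have hidx : n - 1 - 1 - k < L.length := by rw [hlen]; omega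
  have hgd : L.getD (n - 1 - 1 - k) 0 = g n (n - 1 - 1 - k + 1) := by
    rw [List.getD_eq_getElem _ _ hidx]
    simp [hLdef]
  have he : n - 1 - 1 - k + 1 = n - 1 - k := by omega
  rw [Nat.cast_mul, hgd, he, g_eq n (n - 1 - k) (by omega) (by omega)]
  have he2 : n - 1 - k - 1 = (n-1) - (k+1) := by omega
  rw [ZMod.natCast_mod, he2, Nat.choose_symm (by omega)]


/-- target bit `k` of `σ̂ₙ j` -/
def tb (k j : ℕ) : ℕ :=
  if k = 0 then j % 2 else (1 + ∑ s ∈ Finset.range (k+1), Nat.choose k s * nbit j s) % 2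

/-- closed form of `σ̂ₙ` -/
def tau (n j : ℕ) : ℕ := ∑ k ∈ Finset.range n, 2 ^ k * tb k j

lemma tb_le_one (k j : ℕ) : tb k j ≤ 1 := by
  unfold tb
  split
  · omega
  · exact Nat.lt_succ_iff.mp (Nat.mod_lt _ (by norm_num))

lemma tb_mod (k j m : ℕ) (h : k < m) : tb k (j % 2 ^ m) = tb k j := by
  unfold tb
  split
  · rw [Nat.mod_mod_of_dvd _ (dvd_pow_self 2 (by omega))]
  · congr 2
    refine Finset.sum_congr rfl ?_
    intro s hs
    rw [Finset.mem_range] at hs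
    rw [nbit_mod _ _ _ (by omega)]

lemma nat_eq_of_le_one {x y : ℕ} (hx : x ≤ 1) (hy : y ≤ 1)
    (h : (x : ZMod 2) = (y : ZMod 2)) : x = y := by
  interval_cases x <;> interval_cases y <;> simp_all

lemma tb_cast (k j : ℕ) (hk : k ≠ 0) :
    (tb k j : ZMod 2) = 1 + ∑ s ∈ Finset.range (k+1), (Nat.choose k s : ZMod 2) * (nbit j s : ZMod 2) := by
  unfold tb
  rw [if_neg hk, ZMod.natCast_mod]
  push_cast
  ring

lemma nbit_zero (j : ℕ) : nbit j 0 = j % 2 := by unfold nbit; norm_num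

lemma nbit_div_two (j k : ℕ) : nbit (j / 2) k = nbit j (k + 1) := by
  unfold nbit
  rw [Nat.div_div_eq_div_mul, ← pow_succ']

lemma sh_eq : ∀ n, 1 ≤ n → ∀ j, j < 2 ^ n → sigmaHat n j = tau n j := by
  intro n
  induction n with
  | zero => omega
  | succ n ih =>
    intro _ j hj
    match n, ih with
    | 0, _ =>
      have : j < 2 := hj
      show j = tau 1 j
      unfold tau
      simp [tb]
      omega
    | m + 1, ih =>
      show sigmaHat (m + 2) j = tau (m+2) j
      unfold sigmaHat
      have hjm : j % 2 ^ (m+1) < 2 ^ (m+1) := Nat.mod_lt _ (by positivity)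
      rw [ih (by omega) _ hjm]
      have h1 : tau (m+1) (j % 2 ^ (m+1)) = tau (m+1) j := by
        unfold tau
        refine Finset.sum_congr rfl ?_
        intro k hk
        rw [Finset.mem_range] at hk
        rw [tb_mod _ _ _ (by omega)]
      rw [h1]
      have h2 : tau (m+2) j = tau (m+1) j + 2 ^ (m+1) * tb (m+1) j :=
        Finset.sum_range_succ _ _
      rw [h2]
      congr 1
      -- remains: the `c` value equals `tb (m+1) j`
      have hnu := nu_le_one (m+2) (j / 2)
      have hdiv : j / 2 < 2 ^ (m + 2 - 1) := by
        have e : m + 2 - 1 = m + 1 := rfl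
        have hj2 : j < 2 * 2 ^ (m + 1) := by
          have : (2:ℕ) ^ (m + 1 + 1) = 2 * 2 ^ (m + 1) := by ring
          omega
        rw [e]
        omega
      refine congrArg _ (nat_eq_of_le_one (by split <;> omega) (tb_le_one _ _) ?_)
      have hcast : ((if j % 2 = 0 then 1 - nu (m+2) (j / 2) else nu (m+2) (j / 2) : ℕ) : ZMod 2)
          = 1 + (nbit j 0 : ZMod 2) + (nu (m+2) (j / 2) : ZMod 2) := by
        rw [nbit_zero]
        rcases Nat.mod_two_eq_zero_or_one j with h | h <;>
          interval_cases hv : (nu (m+2) (j/2)) <;> simp [h, hv] <;> decide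
      rw [hcast, tb_cast _ _ (by omega), nu_formula _ _ (by omega) hdiv]
      simp only [show m + 2 - 1 = m + 1 from rfl]
      rw [Finset.sum_range_succ' (fun s => (Nat.choose (m+1) s : ZMod 2) * (nbit j s : ZMod 2)) (m+1)]
      simp only [Nat.choose_zero_right, Nat.cast_one, one_mul]
      have hshift : ∀ k, nbit (j/2) k = nbit j (k+1) := fun k => nbit_div_two j k
      have : ∑ k ∈ Finset.range (m + 1), (nbit (j/2) k : ZMod 2) * ((m + 1).choose (k+1) : ZMod 2)
          = ∑ s ∈ Finset.range (m+1), ((m+1).choose (s+1) : ZMod 2) * (nbit j (s+1) : ZMod 2) := by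
        refine Finset.sum_congr rfl ?_
        intro k hk
        rw [hshift k]
        ring
      rw [this]
      ring

lemma tau_lt (n j : ℕ) : tau n j < 2 ^ n :=
  (nbit_sum (fun k => tb k j) (fun k => tb_le_one k j) n).2

lemma nbit_tau (n j k : ℕ) (hk : k < n) : nbit (tau n j) k = tb k j :=
  (nbit_sum (fun k => tb k j) (fun k => tb_le_one k j) n).1 k hk

lemma sigmaHat_lt (n j : ℕ) (hn : 1 ≤ n) (hj : j < 2 ^ n) : sigmaHat n j < 2 ^ n := by
  rw [sh_eq n hn j hj]; exact tau_lt n j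

lemma tau_inj {n j j' : ℕ} (hj : j < 2 ^ n) (hj' : j' < 2 ^ n)
    (h : tau n j = tau n j') : j = j' := by
  have hb : ∀ k, k < n → tb k j = tb k j' := by
    intro k hk
    rw [← nbit_tau n j k hk, h, nbit_tau n j' k hk]
  have hbit : ∀ k, k < n → nbit j k = nbit j' k := by
    intro k
    induction k using Nat.strong_induction_on with
    | _ k ihk =>
      intro hk
      rcases Nat.eq_zero_or_pos k with rfl | hk0
      · have := hb 0 hk
        unfold tb at this
        rw [if_pos rfl, if_pos rfl] at this
        rw [nbit_zero, nbit_zero]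
        exact this
      · have h1 := hb k hk
        have h2 : (tb k j : ZMod 2) = tb k j' := by rw [h1]
        rw [tb_cast _ _ (by omega), tb_cast _ _ (by omega)] at h2
        rw [Finset.sum_range_succ, Finset.sum_range_succ] at h2
        have h3 : ∑ s ∈ Finset.range k, (Nat.choose k s : ZMod 2) * (nbit j s : ZMod 2)
            = ∑ s ∈ Finset.range k, (Nat.choose k s : ZMod 2) * (nbit j' s : ZMod 2) := by
          refine Finset.sum_congr rfl ?_
          intro s hs
          rw [Finset.mem_range] at hs
          rw [ihk s hs (by omega)]
        rw [h3, Nat.choose_self] at h2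
        have h4 : (nbit j k : ZMod 2) = (nbit j' k : ZMod 2) := by
          field_simp at h2
          linear_combination h2
        exact nat_eq_of_le_one (nbit_le_one _ _) (nbit_le_one _ _) h4
  have e1 := nbit_expand n j hj
  have e2 := nbit_expand n j' hj'
  rw [e1, e2]
  exact Finset.sum_congr rfl (fun k hk => by rw [hbit k (Finset.mem_range.mp hk)])


section MatrixEntries

lemma two_pow_succ_eq (n : ℕ) : (2:ℕ) ^ (n+1) = 2 ^ n + 2 ^ n := by ring

lemma blockEquiv_apply_inl {n : ℕ} (x : Fin (2^n)) :
    ((blockEquiv n) (Sum.inl x) : ℕ) = (x : ℕ) := rfl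

lemma blockEquiv_apply_inr {n : ℕ} (x : Fin (2^n)) :
    ((blockEquiv n) (Sum.inr x) : ℕ) = 2 ^ n + (x : ℕ) := rfl

lemma blockEquiv_symm_lt {n : ℕ} (i : Fin (2^(n+1))) (h : (i:ℕ) < 2^n) :
    (blockEquiv n).symm i = Sum.inl ⟨(i:ℕ), h⟩ := by
  rw [Equiv.symm_apply_eq]
  apply Fin.ext
  rw [blockEquiv_apply_inl]

lemma blockEquiv_symm_ge {n : ℕ} (i : Fin (2^(n+1))) (h : 2^n ≤ (i:ℕ)) :
    (blockEquiv n).symm i = Sum.inr ⟨(i:ℕ) - 2^n, by have := i.is_lt; have := two_pow_succ_eq n; omega⟩ := by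
  rw [Equiv.symm_apply_eq]
  apply Fin.ext
  rw [blockEquiv_apply_inr]
  exact (by omega : (i:ℕ) = 2^n + ((i:ℕ) - 2^n))

lemma mkBlock_apply_11 {n : ℕ} (A B C D : Matrix (Fin (2^n)) (Fin (2^n)) ℝ)
    (i j : Fin (2^(n+1))) (hi : (i:ℕ) < 2^n) (hj : (j:ℕ) < 2^n) :
    mkBlock A B C D i j = A ⟨i, hi⟩ ⟨j, hj⟩ := by
  unfold mkBlock
  rw [Matrix.reindex_apply, Matrix.submatrix_apply, blockEquiv_symm_lt i hi, blockEquiv_symm_lt j hj]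
  rfl

lemma mkBlock_apply_12 {n : ℕ} (A B C D : Matrix (Fin (2^n)) (Fin (2^n)) ℝ)
    (i j : Fin (2^(n+1))) (hi : (i:ℕ) < 2^n) (hj : 2^n ≤ (j:ℕ)) :
    mkBlock A B C D i j = B ⟨i, hi⟩ ⟨(j:ℕ) - 2^n, by have := j.is_lt; have := two_pow_succ_eq n; omega⟩ := by
  unfold mkBlock
  rw [Matrix.reindex_apply, Matrix.submatrix_apply, blockEquiv_symm_lt i hi, blockEquiv_symm_ge j hj]
  rfl

lemma mkBlock_apply_21 {n : ℕ} (A B C D : Matrix (Fin (2^n)) (Fin (2^n)) ℝ)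
    (i j : Fin (2^(n+1))) (hi : 2^n ≤ (i:ℕ)) (hj : (j:ℕ) < 2^n) :
    mkBlock A B C D i j = C ⟨(i:ℕ) - 2^n, by have := i.is_lt; have := two_pow_succ_eq n; omega⟩ ⟨j, hj⟩ := by
  unfold mkBlock
  rw [Matrix.reindex_apply, Matrix.submatrix_apply, blockEquiv_symm_ge i hi, blockEquiv_symm_lt j hj]
  rfl

lemma mkBlock_apply_22 {n : ℕ} (A B C D : Matrix (Fin (2^n)) (Fin (2^n)) ℝ)
    (i j : Fin (2^(n+1))) (hi : 2^n ≤ (i:ℕ)) (hj : 2^n ≤ (j:ℕ)) :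
    mkBlock A B C D i j = D ⟨(i:ℕ) - 2^n, by have := i.is_lt; have := two_pow_succ_eq n; omega⟩
      ⟨(j:ℕ) - 2^n, by have := j.is_lt; have := two_pow_succ_eq n; omega⟩ := by
  unfold mkBlock
  rw [Matrix.reindex_apply, Matrix.submatrix_apply, blockEquiv_symm_ge i hi, blockEquiv_symm_ge j hj]
  rfl

lemma aB_bB_apply : ∀ n, 1 ≤ n → ∀ i j : Fin (2^n),
    (aB n i j = if (i:ℕ) = (j:ℕ)/2 then 1 else 0) ∧
    (bB n i j = if (i:ℕ) = (j:ℕ)/2 + 2^(n-1) then 1 else 0) := by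
  intro n
  induction n with
  | zero => omega
  | succ n ih =>
    intro _ i j
    have hi2 := i.is_lt
    have hj2 := j.is_lt
    have hp := two_pow_succ_eq n
    rcases Nat.eq_zero_or_pos n with rfl | hn
    · -- base case n = 1
      have haB : aB 1 = mkBlock (aB 0) (bB 0) 0 0 := rfl
      have hbB : bB 1 = mkBlock 0 0 (aB 0) (bB 0) := rfl
      have h0 : ∀ (x y : Fin (2^0)), aB 0 x y = 1 ∧ bB 0 x y = 1 := by
        intro x y
        have hx : (x:ℕ) < 1 := by simpa using x.is_lt
        have hy : (y:ℕ) < 1 := by simpa using y.is_lt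
        have : x = y := Fin.ext (by omega)
        subst this
        exact ⟨Matrix.one_apply_eq x, Matrix.one_apply_eq x⟩
      constructor
      · rw [haB]
        rcases Nat.lt_or_ge (i:ℕ) (2^0) with hi | hi <;> rcases Nat.lt_or_ge (j:ℕ) (2^0) with hj | hj
        · rw [mkBlock_apply_11 _ _ _ _ _ _ hi hj, (h0 _ _).1, if_pos (by omega)]
        · rw [mkBlock_apply_12 _ _ _ _ _ _ hi hj, (h0 _ _).2, if_pos (by omega)]
        · rw [mkBlock_apply_21 _ _ _ _ _ _ hi hj, Matrix.zero_apply, if_neg (by omega)]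
        · rw [mkBlock_apply_22 _ _ _ _ _ _ hi hj, Matrix.zero_apply, if_neg (by omega)]
      · rw [hbB]
        rcases Nat.lt_or_ge (i:ℕ) (2^0) with hi | hi <;> rcases Nat.lt_or_ge (j:ℕ) (2^0) with hj | hj
        · rw [mkBlock_apply_11 _ _ _ _ _ _ hi hj, Matrix.zero_apply, if_neg (by omega)]
        · rw [mkBlock_apply_12 _ _ _ _ _ _ hi hj, Matrix.zero_apply, if_neg (by omega)]
        · rw [mkBlock_apply_21 _ _ _ _ _ _ hi hj, (h0 _ _).1, if_pos (by omega)]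
        · rw [mkBlock_apply_22 _ _ _ _ _ _ hi hj, (h0 _ _).2, if_pos (by omega)]
    · -- inductive step, n ≥ 1
      have ihn := ih hn
      have haB : aB (n+1) = mkBlock (aB n) (bB n) 0 0 := rfl
      have hbB : bB (n+1) = mkBlock 0 0 (aB n) (bB n) := rfl
      have hpow : (2:ℕ)^n = 2^(n-1) + 2^(n-1) := by
        rw [← two_pow_succ_eq]; congr 1; omega
      constructor
      · rw [haB]
        rcases Nat.lt_or_ge (i:ℕ) (2^n) with hi | hi <;> rcases Nat.lt_or_ge (j:ℕ) (2^n) with hj | hj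
        · rw [mkBlock_apply_11 _ _ _ _ _ _ hi hj, (ihn _ _).1]
        · rw [mkBlock_apply_12 _ _ _ _ _ _ hi hj, (ihn _ _).2]
          exact if_congr (by simp only []; omega) rfl rfl
        · rw [mkBlock_apply_21 _ _ _ _ _ _ hi hj, Matrix.zero_apply, if_neg (by omega)]
        · rw [mkBlock_apply_22 _ _ _ _ _ _ hi hj, Matrix.zero_apply, if_neg (by omega)]
      · rw [hbB]
        have he : (2:ℕ)^(n+1-1) = 2^n := by congr 1
        rw [he]
        rcases Nat.lt_or_ge (i:ℕ) (2^n) with hi | hi <;> rcases Nat.lt_or_ge (j:ℕ) (2^n) with hj | hj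
        · rw [mkBlock_apply_11 _ _ _ _ _ _ hi hj, Matrix.zero_apply, if_neg (by omega)]
        · rw [mkBlock_apply_12 _ _ _ _ _ _ hi hj, Matrix.zero_apply, if_neg (by omega)]
        · rw [mkBlock_apply_21 _ _ _ _ _ _ hi hj, (ihn _ _).1]
          exact if_congr (by simp only []; omega) rfl rfl
        · rw [mkBlock_apply_22 _ _ _ _ _ _ hi hj, (ihn _ _).2]
          exact if_congr (by simp only []; omega) rfl rfl

end MatrixEntries


/-- the permutations underlying the lamplighter generators -/
def labHat : ℕ → (ℕ → ℕ) × (ℕ → ℕ)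
  | 0 => (fun j => j, fun j => j)
  | n+1 => (fun j => if j < 2^n then (labHat n).1 j + 2^n else (labHat n).2 (j - 2^n),
            fun j => if j < 2^n then (labHat n).1 j else (labHat n).2 (j - 2^n) + 2^n)

lemma labHat_lt : ∀ n j, j < 2^n → (labHat n).1 j < 2^n ∧ (labHat n).2 j < 2^n := by
  intro n
  induction n with
  | zero => intro j hj; simp at hj; simp [labHat, hj]
  | succ n ih =>
    intro j hj
    have hp := two_pow_succ_eq n
    simp only [labHat]
    rcases Nat.lt_or_ge j (2^n) with h | h
    · rw [if_pos h, if_pos h]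
      have := ih j h
      omega
    · rw [if_neg (by omega), if_neg (by omega)]
      have := ih (j - 2^n) (by omega)
      omega

lemma aL_bL_apply : ∀ n, ∀ i j : Fin (2^n),
    (aL n i j = if (i:ℕ) = (labHat n).1 (j:ℕ) then 1 else 0) ∧
    (bL n i j = if (i:ℕ) = (labHat n).2 (j:ℕ) then 1 else 0) := by
  intro n
  induction n with
  | zero =>
    intro i j
    have hi : (i:ℕ) < 1 := by simpa using i.is_lt
    have hj : (j:ℕ) < 1 := by simpa using j.is_lt
    have : i = j := Fin.ext (by omega)
    subst this
    have h1 : aL 0 i i = 1 := Matrix.one_apply_eq i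
    have h2 : bL 0 i i = 1 := Matrix.one_apply_eq i
    rw [h1, h2]
    constructor <;> rw [if_pos (by simp [labHat])]
  | succ n ih =>
    intro i j
    have hi2 := i.is_lt
    have hj2 := j.is_lt
    have hp := two_pow_succ_eq n
    have haL : aL (n+1) = mkBlock 0 (bL n) (aL n) 0 := rfl
    have hbL : bL (n+1) = mkBlock (aL n) 0 0 (bL n) := rfl
    constructor
    · rw [haL]
      rcases Nat.lt_or_ge (j:ℕ) (2^n) with hj | hj
      · have hv : (labHat (n+1)).1 (j:ℕ) = (labHat n).1 (j:ℕ) + 2^n := by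
          simp only [labHat]; rw [if_pos hj]
        rw [hv]
        rcases Nat.lt_or_ge (i:ℕ) (2^n) with hi | hi
        · rw [mkBlock_apply_11 _ _ _ _ _ _ hi hj, Matrix.zero_apply, if_neg (by omega)]
        · rw [mkBlock_apply_21 _ _ _ _ _ _ hi hj, (ih _ _).1]
          simp only [Fin.val_mk]
          exact if_congr (by omega) rfl rfl
      · have hv : (labHat (n+1)).1 (j:ℕ) = (labHat n).2 ((j:ℕ) - 2^n) := by
          simp only [labHat]; rw [if_neg (by omega)]
        have hlt := (labHat_lt n ((j:ℕ) - 2^n) (by omega)).2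
        rw [hv]
        rcases Nat.lt_or_ge (i:ℕ) (2^n) with hi | hi
        · rw [mkBlock_apply_12 _ _ _ _ _ _ hi hj, (ih _ _).2]
        · rw [mkBlock_apply_22 _ _ _ _ _ _ hi hj, Matrix.zero_apply, if_neg (by omega)]
    · rw [hbL]
      rcases Nat.lt_or_ge (j:ℕ) (2^n) with hj | hj
      · have hv : (labHat (n+1)).2 (j:ℕ) = (labHat n).1 (j:ℕ) := by
          simp only [labHat]; rw [if_pos hj]
        have hlt := (labHat_lt n (j:ℕ) hj).1
        rw [hv]
        rcases Nat.lt_or_ge (i:ℕ) (2^n) with hi | hi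
        · rw [mkBlock_apply_11 _ _ _ _ _ _ hi hj, (ih _ _).1]
        · rw [mkBlock_apply_21 _ _ _ _ _ _ hi hj, Matrix.zero_apply, if_neg (by omega)]
      · have hv : (labHat (n+1)).2 (j:ℕ) = (labHat n).2 ((j:ℕ) - 2^n) + 2^n := by
          simp only [labHat]; rw [if_neg (by omega)]
        rw [hv]
        rcases Nat.lt_or_ge (i:ℕ) (2^n) with hi | hi
        · rw [mkBlock_apply_12 _ _ _ _ _ _ hi hj, Matrix.zero_apply, if_neg (by omega)]
        · rw [mkBlock_apply_22 _ _ _ _ _ _ hi hj, (ih _ _).2]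
          simp only [Fin.val_mk]
          exact if_congr (by omega) rfl rfl


lemma div_pow_eq_one {n x : ℕ} (h1 : 2^n ≤ x) (h2 : x < 2^(n+1)) : x / 2^n = 1 :=
  Nat.div_eq_of_lt_le (by omega) (by have := two_pow_succ_eq n; omega)

lemma nbit_top_one {n x : ℕ} (h1 : 2^n ≤ x) (h2 : x < 2^(n+1)) : nbit x n = 1 := by
  unfold nbit; rw [div_pow_eq_one h1 h2]

lemma labHat_bits : ∀ n, 1 ≤ n → ∀ j, j < 2^n → ∀ s, s < n →
    ((nbit ((labHat n).1 j) s : ZMod 2) = (nbit j s : ZMod 2) + (nbit j (s+1) : ZMod 2) + 1) ∧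
    ((nbit ((labHat n).2 j) s : ZMod 2) = (nbit j s : ZMod 2) + (nbit j (s+1) : ZMod 2) + 1
      + (if s = n - 1 then 1 else 0)) := by
  intro n
  induction n with
  | zero => omega
  | succ n ih =>
    intro _ j hj s hs
    have hp := two_pow_succ_eq n
    rcases Nat.eq_zero_or_pos n with rfl | hn
    · have hj1 : j < 2 := hj
      have hs0 : s = 0 := by omega
      subst hs0
      interval_cases j <;> constructor <;> simp [labHat, nbit] <;> decide
    · have hjtop : nbit j (n+1) = 0 := nbit_eq_zero_of_lt hj _ le_rfl
      rcases Nat.lt_or_ge j (2^n) with hjn | hjn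
      · -- lower half
        have hv1 : (labHat (n+1)).1 j = (labHat n).1 j + 2^n := by
          simp only [labHat]; rw [if_pos hjn]
        have hv2 : (labHat (n+1)).2 j = (labHat n).1 j := by
          simp only [labHat]; rw [if_pos hjn]
        have hl1 := (labHat_lt n j hjn).1
        rw [hv1, hv2]
        rcases Nat.lt_or_ge s n with hsn | hsn
        · have hIH := (ih hn j hjn s hsn).1
          have hb1 : nbit ((labHat n).1 j + 2^n) s = nbit ((labHat n).1 j) s := by
            rw [Nat.add_comm, nbit_add_pow _ _ _ hsn]
          have hif : (if s = n + 1 - 1 then (1:ZMod 2) else 0) = 0 := if_neg (by omega)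
          rw [hb1, hIH, hif, add_zero]
          exact ⟨rfl, rfl⟩
        · have hsn' : s = n := by omega
          rw [hsn']
          have hb1 : nbit ((labHat n).1 j + 2^n) n = 1 :=
            nbit_top_one (by omega) (by omega)
          have hb2 : nbit ((labHat n).1 j) n = 0 := nbit_eq_zero_of_lt hl1 _ le_rfl
          have hb3 : nbit j n = 0 := nbit_eq_zero_of_lt hjn _ le_rfl
          have hif : (if n = n + 1 - 1 then (1:ZMod 2) else 0) = 1 := if_pos (by omega)
          rw [hb1, hb2, hb3, hjtop, hif]
          constructor <;> push_cast <;> first | decide | ring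
      · -- upper half
        set r := j - 2^n with hrdef
        have hr : r < 2^n := by omega
        have hjr : j = 2^n + r := by omega
        have hv1 : (labHat (n+1)).1 j = (labHat n).2 r := by
          simp only [labHat]; rw [if_neg (by omega)]
        have hv2 : (labHat (n+1)).2 j = (labHat n).2 r + 2^n := by
          simp only [labHat]; rw [if_neg (by omega)]
        have hl2 := (labHat_lt n r hr).2
        have hjn1 : nbit j n = 1 := nbit_top_one hjn hj
        have hlow : ∀ t, t < n → nbit j t = nbit r t := by
          intro t ht; rw [hjr, nbit_add_pow _ _ _ ht]
        rw [hv1, hv2]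
        rcases Nat.lt_or_ge s n with hsn | hsn
        · have hIH := (ih hn r hr s hsn).2
          have hb1 : nbit ((labHat n).2 r + 2^n) s = nbit ((labHat n).2 r) s := by
            rw [Nat.add_comm, nbit_add_pow _ _ _ hsn]
          have hif2 : (if s = n + 1 - 1 then (1:ZMod 2) else 0) = 0 := if_neg (by omega)
          rw [hb1, hIH, hif2, add_zero, hlow s hsn]
          rcases Nat.lt_or_ge (s+1) n with hs1 | hs1
          · have hif : (if s = n - 1 then (1:ZMod 2) else 0) = 0 := if_neg (by omega)
            rw [hif, hlow (s+1) hs1, add_zero]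
            exact ⟨rfl, rfl⟩
          · have hsn1 : s = n - 1 := by omega
            have hs1n : s + 1 = n := by omega
            have hif : (if s = n - 1 then (1:ZMod 2) else 0) = 1 := if_pos hsn1
            have hrn : nbit r (s+1) = 0 := by
              rw [hs1n]; exact nbit_eq_zero_of_lt hr _ le_rfl
            rw [hif, hrn, hs1n, hjn1]
            constructor <;> push_cast <;> first | decide | ring
        · have hsn' : s = n := by omega
          rw [hsn']
          have hb1 : nbit ((labHat n).2 r) n = 0 := nbit_eq_zero_of_lt hl2 _ le_rfl
          have hb2 : nbit ((labHat n).2 r + 2^n) n = 1 := nbit_top_one (by omega) (by omega)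
          have hif : (if n = n + 1 - 1 then (1:ZMod 2) else 0) = 1 := if_pos (by omega)
          rw [hb1, hb2, hjn1, hjtop, hif]
          constructor <;> push_cast <;> decide


lemma sum_choose_zmod (k : ℕ) (hk : 1 ≤ k) :
    ∑ s ∈ Finset.range (k+1), (Nat.choose k s : ZMod 2) = 0 := by
  have h := Nat.sum_range_choose k
  have : ((∑ m ∈ Finset.range (k+1), Nat.choose k m : ℕ) : ZMod 2) = ((2^k : ℕ) : ZMod 2) := by
    rw [h]
  rw [Nat.cast_sum] at this
  rw [this]
  push_cast
  rw [show ((2:ZMod 2)) = 0 from rfl, zero_pow (by omega)]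

lemma tb_from_bits (k x j : ℕ)
    (hb : ∀ s, s ≤ k → (nbit x s : ZMod 2) = (nbit j s : ZMod 2) + (nbit j (s+1) : ZMod 2) + 1) :
    (tb k x : ZMod 2) = (tb (k+1) j : ZMod 2) := by
  rcases Nat.eq_zero_or_pos k with rfl | hk
  · have h0 : (tb 0 x : ZMod 2) = (nbit x 0 : ZMod 2) := by
      unfold tb; rw [if_pos rfl, ← nbit_zero]
    rw [h0, hb 0 le_rfl, tb_cast 1 j (by omega)]
    rw [Finset.sum_range_succ, Finset.sum_range_succ, Finset.sum_range_zero]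
    simp [Nat.choose]
    ring
  · rw [tb_cast _ _ (by omega), tb_cast _ _ (by omega)]
    set A := ∑ s ∈ Finset.range (k+1), (Nat.choose k s : ZMod 2) * (nbit j s : ZMod 2) with hA
    set B := ∑ s ∈ Finset.range (k+1), (Nat.choose k s : ZMod 2) * (nbit j (s+1) : ZMod 2) with hB
    set B' := ∑ s ∈ Finset.range (k+1), (Nat.choose k (s+1) : ZMod 2) * (nbit j (s+1) : ZMod 2) with hB'
    have hLHS : ∑ s ∈ Finset.range (k+1), (Nat.choose k s : ZMod 2) * (nbit x s : ZMod 2)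
        = A + B + ∑ s ∈ Finset.range (k+1), (Nat.choose k s : ZMod 2) := by
      rw [hA, hB, ← Finset.sum_add_distrib, ← Finset.sum_add_distrib]
      refine Finset.sum_congr rfl ?_
      intro s hs
      rw [Finset.mem_range] at hs
      rw [hb s (by omega)]
      ring
    have hAB' : A = B' + (nbit j 0 : ZMod 2) := by
      have h1 : ∑ s ∈ Finset.range (k+2), (Nat.choose k s : ZMod 2) * (nbit j s : ZMod 2) = A := by
        rw [Finset.sum_range_succ, ← hA, Nat.choose_succ_self, Nat.cast_zero, zero_mul, add_zero]
      have h2 := Finset.sum_range_succ' (fun s => (Nat.choose k s : ZMod 2) * (nbit j s : ZMod 2)) (k+1)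
      rw [h1] at h2
      rw [h2, Nat.choose_zero_right]
      push_cast
      ring
    have hRHS : ∑ s ∈ Finset.range (k+1+1), (Nat.choose (k+1) s : ZMod 2) * (nbit j s : ZMod 2)
        = (nbit j 0 : ZMod 2) + B + B' := by
      rw [Finset.sum_range_succ' (fun s => (Nat.choose (k+1) s : ZMod 2) * (nbit j s : ZMod 2)) (k+1)]
      rw [Nat.choose_zero_right]
      have hsplit : ∀ s ∈ Finset.range (k+1),
          (Nat.choose (k+1) (s+1) : ZMod 2) * (nbit j (s+1) : ZMod 2)
            = (Nat.choose k s : ZMod 2) * (nbit j (s+1) : ZMod 2)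
              + (Nat.choose k (s+1) : ZMod 2) * (nbit j (s+1) : ZMod 2) := by
        intro s hs
        rw [Nat.choose_succ_succ]
        push_cast
        ring
      rw [Finset.sum_congr rfl hsplit, Finset.sum_add_distrib, ← hB, ← hB']
      push_cast
      ring
    rw [hLHS, hRHS, sum_choose_zmod k hk, hAB']
    ring

lemma zmod_sum_eq_one {x y : ℕ} (hx : x ≤ 1) (hy : y ≤ 1) (h : (y : ZMod 2) = (x : ZMod 2) + 1) :
    x + y = 1 := by
  interval_cases x <;> interval_cases y <;> simp_all <;> exact absurd h (by decide)

lemma tb_lab_low (n : ℕ) (hn : 1 ≤ n) (j : ℕ) (hj : j < 2^n) (k : ℕ) (hk : k + 1 < n) :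
    tb k ((labHat n).1 j) = tb (k+1) j ∧ tb k ((labHat n).2 j) = tb (k+1) j := by
  constructor
  · refine nat_eq_of_le_one (tb_le_one _ _) (tb_le_one _ _) (tb_from_bits _ _ _ ?_)
    intro s hs
    exact (labHat_bits n hn j hj s (by omega)).1
  · refine nat_eq_of_le_one (tb_le_one _ _) (tb_le_one _ _) (tb_from_bits _ _ _ ?_)
    intro s hs
    have h2 := (labHat_bits n hn j hj s (by omega)).2
    rw [if_neg (by omega), add_zero] at h2
    exact h2

lemma tb_lab_top (n : ℕ) (hn : 1 ≤ n) (j : ℕ) (hj : j < 2^n) :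
    tb (n-1) ((labHat n).1 j) + tb (n-1) ((labHat n).2 j) = 1 := by
  rcases Nat.lt_or_ge n 2 with h2 | h2
  · have : n = 1 := by omega
    subst this
    have : j < 2 := hj
    interval_cases j <;> decide
  · set k := n - 1 with hkdef
    have hk1 : 1 ≤ k := by omega
    have hbit : ∀ s, s ≤ k → (nbit ((labHat n).2 j) s : ZMod 2)
        = (nbit ((labHat n).1 j) s : ZMod 2) + (if s = k then 1 else 0) := by
      intro s hs
      have ha := (labHat_bits n hn j hj s (by omega)).1
      have hb := (labHat_bits n hn j hj s (by omega)).2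
      rw [hb, ← ha, hkdef]
    rw [Nat.add_comm]
    refine zmod_sum_eq_one (tb_le_one _ _) (tb_le_one _ _) ?_
    rw [tb_cast _ _ (by omega), tb_cast _ _ (by omega)]
    have hsum : ∑ s ∈ Finset.range (k+1), (Nat.choose k s : ZMod 2) * (nbit ((labHat n).2 j) s : ZMod 2)
        = ∑ s ∈ Finset.range (k+1), ((Nat.choose k s : ZMod 2) * (nbit ((labHat n).1 j) s : ZMod 2)
            + (if s = k then (Nat.choose k s : ZMod 2) else 0)) := by
      refine Finset.sum_congr rfl ?_
      intro s hs
      rw [Finset.mem_range] at hs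
      rw [hbit s (by omega)]
      rcases eq_or_ne s k with rfl | hne
      · rw [if_pos rfl, if_pos rfl]; ring
      · rw [if_neg hne, if_neg hne]; ring
    rw [hsum, Finset.sum_add_distrib, Finset.sum_ite_eq' (Finset.range (k+1)) k
      (fun s => (Nat.choose k s : ZMod 2))]
    rw [if_pos (Finset.mem_range.mpr (by omega)), Nat.choose_self]
    push_cast
    ring_nf
    rw [show (3:ZMod 2) = 1 by decide]


lemma tau_div_two (n j : ℕ) (hn : 1 ≤ n) :
    tau n j / 2 = ∑ k ∈ Finset.range (n-1), 2^k * tb (k+1) j := by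
  obtain ⟨m, rfl⟩ : ∃ m, n = m + 1 := ⟨n-1, by omega⟩
  have h1 : tau (m+1) j = 2 * (∑ k ∈ Finset.range m, 2^k * tb (k+1) j) + tb 0 j := by
    unfold tau
    rw [Finset.sum_range_succ' (fun k => 2^k * tb k j) m, Finset.mul_sum, pow_zero, one_mul]
    congr 1
    refine Finset.sum_congr rfl ?_
    intro k hk
    ring
  rw [h1, Nat.mul_add_div (by norm_num), Nat.div_eq_of_lt (by have := tb_le_one 0 j; omega),
    add_zero]
  rfl

lemma tau_lab (n j : ℕ) (hn : 1 ≤ n) (hj : j < 2^n) :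
    tau n ((labHat n).1 j) = tau n j / 2 + 2^(n-1) * tb (n-1) ((labHat n).1 j) ∧
    tau n ((labHat n).2 j) = tau n j / 2 + 2^(n-1) * tb (n-1) ((labHat n).2 j) := by
  have hsplit : ∀ x, tau n x = (∑ k ∈ Finset.range (n-1), 2^k * tb k x) + 2^(n-1) * tb (n-1) x := by
    intro x
    unfold tau
    rw [show n = (n-1) + 1 by omega]
    rw [Finset.sum_range_succ]
    simp only [show n + 1 - 1 - 1 = n - 1 by omega, show (n-1) + 1 - 1 = n - 1 by omega]
  constructor
  · rw [hsplit, tau_div_two n j hn]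
    congr 1
    refine Finset.sum_congr rfl ?_
    intro k hk
    rw [Finset.mem_range] at hk
    rw [(tb_lab_low n hn j hj k (by omega)).1]
  · rw [hsplit, tau_div_two n j hn]
    congr 1
    refine Finset.sum_congr rfl ?_
    intro k hk
    rw [Finset.mem_range] at hk
    rw [(tb_lab_low n hn j hj k (by omega)).2]

lemma key (n : ℕ) (hn : 1 ≤ n) (i j : ℕ) (hi : i < 2^n) (hj : j < 2^n) :
    ((if tau n i = tau n j / 2 then (1:ℝ) else 0)
      + (if tau n i = tau n j / 2 + 2^(n-1) then 1 else 0))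
    = (if i = (labHat n).1 j then 1 else 0) + (if i = (labHat n).2 j then 1 else 0) := by
  have hl1 := (labHat_lt n j hj).1
  have hl2 := (labHat_lt n j hj).2
  have htop := tb_lab_top n hn j hj
  have h1 := (tau_lab n j hn hj).1
  have h2 := (tau_lab n j hn hj).2
  have e1 : (tau n i = tau n ((labHat n).1 j)) ↔ (i = (labHat n).1 j) :=
    ⟨fun h => tau_inj hi hl1 h, fun h => by rw [h]⟩
  have e2 : (tau n i = tau n ((labHat n).2 j)) ↔ (i = (labHat n).2 j) :=
    ⟨fun h => tau_inj hi hl2 h, fun h => by rw [h]⟩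
  have hle1 := tb_le_one (n-1) ((labHat n).1 j)
  have hle2 := tb_le_one (n-1) ((labHat n).2 j)
  rcases (by omega : tb (n-1) ((labHat n).1 j) = 0 ∧ tb (n-1) ((labHat n).2 j) = 1
      ∨ tb (n-1) ((labHat n).1 j) = 1 ∧ tb (n-1) ((labHat n).2 j) = 0) with ⟨ha, hb⟩ | ⟨ha, hb⟩
  · rw [ha, Nat.mul_zero, Nat.add_zero] at h1
    rw [hb, Nat.mul_one] at h2
    have c1 : (tau n i = tau n j / 2) ↔ (i = (labHat n).1 j) := by rw [← h1]; exact e1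
    have c2 : (tau n i = tau n j / 2 + 2^(n-1)) ↔ (i = (labHat n).2 j) := by rw [← h2]; exact e2
    rw [if_congr c1 rfl rfl, if_congr c2 rfl rfl]
  · rw [ha, Nat.mul_one] at h1
    rw [hb, Nat.mul_zero, Nat.add_zero] at h2
    have c1 : (tau n i = tau n j / 2) ↔ (i = (labHat n).2 j) := by rw [← h2]; exact e2
    have c2 : (tau n i = tau n j / 2 + 2^(n-1)) ↔ (i = (labHat n).1 j) := by rw [← h1]; exact e1
    rw [if_congr c1 rfl rfl, if_congr c2 rfl rfl]
    ring



lemma MB_apply (n : ℕ) (hn : 1 ≤ n) (x y : Fin (2^n)) :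
    MB n x y = (1/4 : ℝ) * ((if (x:ℕ) = (y:ℕ)/2 then 1 else 0)
      + (if (y:ℕ) = (x:ℕ)/2 then 1 else 0)
      + (if (x:ℕ) = (y:ℕ)/2 + 2^(n-1) then 1 else 0)
      + (if (y:ℕ) = (x:ℕ)/2 + 2^(n-1) then 1 else 0)) := by
  unfold MB
  rw [Matrix.smul_apply, Matrix.add_apply, Matrix.add_apply, Matrix.add_apply,
    Matrix.transpose_apply, Matrix.transpose_apply,
    (aB_bB_apply n hn x y).1, (aB_bB_apply n hn y x).1,
    (aB_bB_apply n hn x y).2, (aB_bB_apply n hn y x).2]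
  rw [smul_eq_mul]

lemma ML_apply (n : ℕ) (x y : Fin (2^n)) :
    ML n x y = (1/4 : ℝ) * ((if (x:ℕ) = (labHat n).1 (y:ℕ) then 1 else 0)
      + (if (y:ℕ) = (labHat n).1 (x:ℕ) then 1 else 0)
      + (if (x:ℕ) = (labHat n).2 (y:ℕ) then 1 else 0)
      + (if (y:ℕ) = (labHat n).2 (x:ℕ) then 1 else 0)) := by
  unfold ML
  rw [Matrix.smul_apply, Matrix.add_apply, Matrix.add_apply, Matrix.add_apply,
    Matrix.transpose_apply, Matrix.transpose_apply,
    (aL_bL_apply n x y).1, (aL_bL_apply n y x).1,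
    (aL_bL_apply n x y).2, (aL_bL_apply n y x).2]
  rw [smul_eq_mul]

lemma sigmaMat_apply' (n : ℕ) (hn : 1 ≤ n) (l b : Fin (2^n)) :
    sigmaMat n l b = if l = (⟨sigmaHat n b, sigmaHat_lt n b hn b.is_lt⟩ : Fin (2^n)) then (1:ℝ) else 0 := by
  unfold sigmaMat
  rw [Matrix.of_apply]
  exact if_congr (by rw [Fin.ext_iff]) rfl rfl

lemma mul_sigma (n : ℕ) (hn : 1 ≤ n) (M : Matrix (Fin (2^n)) (Fin (2^n)) ℝ) (a b : Fin (2^n)) :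
    (M * sigmaMat n) a b = M a ⟨sigmaHat n b, sigmaHat_lt n b hn b.is_lt⟩ := by
  rw [Matrix.mul_apply]
  set sb : Fin (2^n) := ⟨sigmaHat n b, sigmaHat_lt n b hn b.is_lt⟩ with hsb
  have h : ∀ l : Fin (2^n), M a l * sigmaMat n l b = if l = sb then M a l else 0 := by
    intro l
    rw [sigmaMat_apply' n hn l b, ← hsb, mul_ite, mul_one, mul_zero]
  rw [Finset.sum_congr rfl (fun l _ => h l), Finset.sum_ite_eq' Finset.univ sb (fun l => M a l),
    if_pos (Finset.mem_univ _)]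

lemma sigmaT_mul (n : ℕ) (hn : 1 ≤ n) (M : Matrix (Fin (2^n)) (Fin (2^n)) ℝ) (a b : Fin (2^n)) :
    ((sigmaMat n)ᵀ * M) a b = M ⟨sigmaHat n a, sigmaHat_lt n a hn a.is_lt⟩ b := by
  rw [Matrix.mul_apply]
  set sa : Fin (2^n) := ⟨sigmaHat n a, sigmaHat_lt n a hn a.is_lt⟩ with hsa
  have h : ∀ l : Fin (2^n), (sigmaMat n)ᵀ a l * M l b = if l = sa then M l b else 0 := by
    intro l
    rw [Matrix.transpose_apply, sigmaMat_apply' n hn l a, ← hsa, ite_mul, one_mul, zero_mul]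
  rw [Finset.sum_congr rfl (fun l _ => h l), Finset.sum_ite_eq' Finset.univ sa (fun l => M l b),
    if_pos (Finset.mem_univ _)]

/-- For every `n ≥ 1`, the permutation matrix `σₙ` satisfies
`σₙᵀ M_B⁽ⁿ⁾ σₙ = M_L⁽ⁿ⁾`. -/
theorem sigma_conjugates_MB_to_ML (n : ℕ) (hn : 1 ≤ n) :
    (sigmaMat n)ᵀ * MB n * sigmaMat n = ML n := by
  ext i j
  have hi := i.is_lt
  have hj := j.is_lt
  rw [mul_sigma n hn _ i j, sigmaT_mul n hn _ i _, MB_apply n hn, ML_apply n]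
  simp only [Fin.val_mk]
  simp only [sh_eq n hn (i:ℕ) hi, sh_eq n hn (j:ℕ) hj]
  have k1 := key n hn (i:ℕ) (j:ℕ) hi hj
  have k2 := key n hn (j:ℕ) (i:ℕ) hj hi
  have e1 : (labHat n).1 (j:ℕ) = (labHat n).1 (j:ℕ) := rfl
  linarith [k1, k2]
end

section
/- For every n ≥ 1, every ε ∈ {0,1}, and all j, k ∈ I_n with binary expansions j = (j_1,…,j_n)_2 and k = (k_1,…,k_n)_2: the (j,k) entry of the BBS generator matrix (a^{(n)} if ε = 0, b^{(n)} if ε = 1) equals the residue mod 2 of the product (j_1+1+ε)(j_2+1+k_1)(j_3+1+k_2)⋯(j_n+1+k_{n-1}), and the (j,k) entry of the lamplighter generator matrix (a_L^{(n)} if ε = 0, b_L^{(n)} if ε = 1) equals the residue mod 2 of the product (j_1+k_1+ε)(j_2+k_2+k_1)(j_3+k_3+k_2)⋯(j_n+k_n+k_{n-1}). -/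
open Matrix

/-- The `j`-th binary digit (`1 ≤ j ≤ n`, most significant first) of `c ∈ {0, …, 2ⁿ−1}`:
`c = Σ_{j=1}^n c_j 2^{n−j}`. -/
def digit (n c j : ℕ) : ℕ := c / 2 ^ (n - j) % 2

/-!
Write `j = 2ⁿ j₁ + j'` and `k = 2ⁿ k₁ + k'` with `j', k' < 2ⁿ`. The block recursions say that the
`(j, k)` entry of the level-`(n+1)` generator indexed by `ε` is `(j₁ + 1 + ε) mod 2` (BBS) or
`(j₁ + k₁ + ε) mod 2` (lamplighter) times the `(j', k')` entry of the level-`n` generator indexed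
by `k₁`. Unfolding, an entry is the parity of a product over the digits in which each factor
involves the preceding digit of `k`, the role of `k₀` being played by `ε`; for `n ≥ 1` splitting
off the first factor gives the stated formula.
-/

open Finset

lemma digit_succ_one (n c : ℕ) : digit (n + 1) c 1 = c / 2 ^ n % 2 := rfl

lemma digit_succ_succ (n c : ℕ) {i : ℕ} (hi : 0 < i) (hin : i ≤ n) :
    digit (n + 1) c (i + 1) = digit n (c % 2 ^ n) i := by
  have hsplit : 2 ^ n = 2 ^ (n - i) * 2 ^ i := by rw [← pow_add, Nat.sub_add_cancel hin]
  unfold digit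
  rw [Nat.add_sub_add_right, hsplit, Nat.mod_mul_right_div_self,
    Nat.mod_mod_of_dvd _ (dvd_pow_self 2 hi.ne')]

lemma digit_two_pow_mul_add {n ε k i : ℕ} (hε : ε < 2) (hk : k < 2 ^ n) (hi : i ≤ n) :
    digit (n + 1) (2 ^ n * ε + k) (i + 1) = if i = 0 then ε else digit n k i := by
  rcases Nat.eq_zero_or_pos i with rfl | hpos
  · rw [if_pos rfl, digit_succ_one, Nat.mul_add_div (Nat.two_pow_pos n), Nat.div_eq_of_lt hk,
      add_zero, Nat.mod_eq_of_lt hε]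
  · rw [if_neg hpos.ne', digit_succ_succ n _ hpos hi, Nat.mul_add_mod, Nat.mod_eq_of_lt hk]

lemma mul_mod_two (a b : ℕ) : a * b % 2 = a % 2 * (b % 2) := by
  rcases Nat.mod_two_eq_zero_or_one a with h | h <;> simp [Nat.mul_mod, h]

/-- The third argument of `f` is the digit of `k` preceding the current one, with `ε` in front
of `k₁`: the digits of `2ⁿε + k` are `ε, k₁, …, kₙ`. -/
def digitProd (f : ℕ → ℕ → ℕ → ℕ) (n ε j k : ℕ) : ℕ :=
  ∏ i ∈ range n, f (digit n j (i + 1)) (digit n k (i + 1)) (digit (n + 1) (2 ^ n * ε + k) (i + 1))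

lemma digitProd_succ (f : ℕ → ℕ → ℕ → ℕ) {n ε j k : ℕ} (hε : ε < 2) (hj : j < 2 ^ (n + 1))
    (hk : k < 2 ^ (n + 1)) :
    digitProd f (n + 1) ε j k =
      digitProd f n (k / 2 ^ n) (j % 2 ^ n) (k % 2 ^ n) * f (j / 2 ^ n) (k / 2 ^ n) ε := by
  have hdiv (c : ℕ) (hc : c < 2 ^ (n + 1)) : c / 2 ^ n % 2 = c / 2 ^ n :=
    Nat.mod_eq_of_lt (Nat.div_lt_of_lt_mul (by rwa [← pow_succ]))
  unfold digitProd
  rw [prod_range_succ', Nat.div_add_mod]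
  congr 1
  · refine prod_congr rfl fun i hi => ?_
    have hi : i < n := mem_range.1 hi
    rw [digit_succ_succ n j (Nat.succ_pos i) hi, digit_succ_succ n k (Nat.succ_pos i) hi,
      digit_two_pow_mul_add hε hk (by omega), if_neg (Nat.succ_ne_zero i)]
  · rw [digit_two_pow_mul_add hε hk (Nat.zero_le _), if_pos rfl, zero_add, digit_succ_one,
      digit_succ_one, hdiv j hj, hdiv k hk]

lemma digitProd_succ_eq_prod_Icc (f : ℕ → ℕ → ℕ → ℕ) {n ε k : ℕ} (j : ℕ) (hε : ε < 2)
    (hk : k < 2 ^ (n + 1)) :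
    digitProd f (n + 1) ε j k = f (digit (n + 1) j 1) (digit (n + 1) k 1) ε *
      ∏ i ∈ Icc 2 (n + 1), f (digit (n + 1) j i) (digit (n + 1) k i) (digit (n + 1) k (i - 1)) := by
  unfold digitProd
  rw [prod_range_succ', mul_comm, ← Ico_add_one_right_eq_Icc, prod_Ico_eq_prod_range,
    show n + 1 + 1 - 2 = n by omega, zero_add, digit_two_pow_mul_add hε hk (Nat.zero_le _),
    if_pos rfl]
  congr 1
  refine prod_congr rfl fun i hi => ?_
  rw [digit_two_pow_mul_add hε hk (by simp at hi; omega), if_neg (Nat.succ_ne_zero i),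
    show 2 + i = i + 1 + 1 by omega, Nat.add_sub_cancel]

def lowBits {n : ℕ} (j : Fin (2 ^ (n + 1))) : Fin (2 ^ n) :=
  ⟨j % 2 ^ n, Nat.mod_lt _ (Nat.two_pow_pos n)⟩

theorem apply_eq_digitProd (f : ℕ → ℕ → ℕ → ℕ)
    (G : (n : ℕ) → ℕ → Matrix (Fin (2 ^ n)) (Fin (2 ^ n)) ℝ) (hG₀ : ∀ ε < 2, G 0 ε = 1)
    (hG : ∀ n ε, ε < 2 → ∀ j k : Fin (2 ^ (n + 1)), G (n + 1) ε j k =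
      ((f (j / 2 ^ n) (k / 2 ^ n) ε % 2 : ℕ) : ℝ) * G n ((k : ℕ) / 2 ^ n) (lowBits j) (lowBits k))
    (n ε : ℕ) (hε : ε < 2) (j k : Fin (2 ^ n)) :
    G n ε j k = (digitProd f n ε j k % 2 : ℕ) := by
  induction n generalizing ε with
  | zero =>
    rw [hG₀ ε hε, Subsingleton.elim (α := Fin 1) j k]
    simp [digitProd]
  | succ n ih =>
    rw [hG n ε hε, ih _ (Nat.div_lt_of_lt_mul (pow_succ 2 n ▸ k.isLt)),
      digitProd_succ f hε j.isLt k.isLt, mul_mod_two, Nat.cast_mul, mul_comm]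
    rfl

lemma blockEquiv_inl_val (n : ℕ) (i : Fin (2 ^ n)) : (blockEquiv n (Sum.inl i) : ℕ) = i := by
  simp [blockEquiv]

lemma blockEquiv_inr_val (n : ℕ) (i : Fin (2 ^ n)) :
    (blockEquiv n (Sum.inr i) : ℕ) = 2 ^ n + i := by
  simp [blockEquiv]
  omega

lemma aB_bB_succ_apply {n ε : ℕ} (hε : ε < 2) (j k : Fin (2 ^ (n + 1))) :
    (if ε = 0 then aB (n + 1) else bB (n + 1)) j k =
      ((((j : ℕ) / 2 ^ n + 1 + ε) % 2 : ℕ) : ℝ) *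
        (if (k : ℕ) / 2 ^ n = 0 then aB n else bB n) (lowBits j) (lowBits k) := by
  obtain ⟨x, rfl⟩ := (blockEquiv n).surjective j
  obtain ⟨y, rfl⟩ := (blockEquiv n).surjective k
  interval_cases ε <;> rcases x with i | i <;> rcases y with i' | i' <;>
    simp [aB, bB, abB, mkBlock, lowBits, blockEquiv_inl_val, blockEquiv_inr_val, Nat.div_eq_of_lt,
      Nat.mod_eq_of_lt]

lemma aL_bL_succ_apply {n ε : ℕ} (hε : ε < 2) (j k : Fin (2 ^ (n + 1))) :
    (if ε = 0 then aL (n + 1) else bL (n + 1)) j k =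
      ((((j : ℕ) / 2 ^ n + (k : ℕ) / 2 ^ n + ε) % 2 : ℕ) : ℝ) *
        (if (k : ℕ) / 2 ^ n = 0 then aL n else bL n) (lowBits j) (lowBits k) := by
  obtain ⟨x, rfl⟩ := (blockEquiv n).surjective j
  obtain ⟨y, rfl⟩ := (blockEquiv n).surjective k
  interval_cases ε <;> rcases x with i | i <;> rcases y with i' | i' <;>
    simp [aL, bL, abL, mkBlock, lowBits, blockEquiv_inl_val, blockEquiv_inr_val, Nat.div_eq_of_lt,
      Nat.mod_eq_of_lt]

/-- Explicit entry formulas for the BBS and lamplighter generators: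
for `ε ∈ {0, 1}` and `j, k ∈ Iₙ` with binary digits `j_i`, `k_i`,
the `(j, k)` entry of the BBS generator (`a⁽ⁿ⁾` if `ε = 0`, `b⁽ⁿ⁾` if `ε = 1`) is
`(j_1+1+ε)(j_2+1+k_1)⋯(j_n+1+k_{n-1}) mod 2`, and that of the lamplighter generator is
`(j_1+k_1+ε)(j_2+k_2+k_1)⋯(j_n+k_n+k_{n-1}) mod 2`. -/
theorem generator_entries (n : ℕ) (hn : 1 ≤ n) (ε : ℕ) (hε : ε = 0 ∨ ε = 1)
    (j k : Fin (2 ^ n)) :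
    (if ε = 0 then aB n else bB n) j k
        = (((digit n (j : ℕ) 1 + 1 + ε) *
            ∏ i ∈ Finset.Icc 2 n, (digit n (j : ℕ) i + 1 + digit n (k : ℕ) (i - 1))) % 2 : ℕ) ∧
      (if ε = 0 then aL n else bL n) j k
        = (((digit n (j : ℕ) 1 + digit n (k : ℕ) 1 + ε) *
            ∏ i ∈ Finset.Icc 2 n,
              (digit n (j : ℕ) i + digit n (k : ℕ) i + digit n (k : ℕ) (i - 1))) % 2 : ℕ) := by
  obtain ⟨m, rfl⟩ : ∃ m, n = m + 1 := ⟨n - 1, by omega⟩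
  have hε₂ : ε < 2 := by omega
  constructor
  · rw [apply_eq_digitProd (fun a _ c => a + 1 + c) (fun n ε => if ε = 0 then aB n else bB n)
      (fun _ _ => by split_ifs <;> rfl) (fun _ _ => aB_bB_succ_apply) (m + 1) ε hε₂ j k,
      digitProd_succ_eq_prod_Icc _ j hε₂ k.isLt]
  · rw [apply_eq_digitProd (fun a b c => a + b + c) (fun n ε => if ε = 0 then aL n else bL n)
      (fun _ _ => by split_ifs <;> rfl) (fun _ _ => aL_bL_succ_apply) (m + 1) ε hε₂ j k,
      digitProd_succ_eq_prod_Icc _ j hε₂ k.isLt]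
end
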